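/- Lower bound for empirical eigenvalues: under a bounded kernel with bound M_k, for any eigenpair (λ̂_t, f̂_t) of the pooled empirical covariance Σ̂ and any unit vector f_t ∈ H, λ̂_t ≥ (1/2n) Σ_i ⟨f̂_t, φ(X_i)−φ(Y_i)⟩² − (1/2)‖μ̂_X − μ̂_Y‖² − 8 M_k ‖f_t − f̂_t‖ − (1/n) Σ_i ⟨f_t, μ̂_X − φ(X_i)⟩⟨f_t, φ(Y_i) − μ̂_Y⟩. -/
import Mathlib


open scoped RealInnerProductSpace BigOperators

/-- The rank-one operator `f ⊗ g : h ↦ ⟪g, h⟫ f`. -/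
noncomputable def rankOne {H : Type*} [NormedAddCommGroup H] [InnerProductSpace ℝ H]
    (f g : H) : H →L[ℝ] H :=
  (innerSL ℝ g).smulRight f

/-- Empirical mean embedding. -/
noncomputable def empMean {Zt H : Type*} [NormedAddCommGroup H] [InnerProductSpace ℝ H]
    (φ : Zt → H) (n : ℕ) (x : Fin n → Zt) : H :=
  (n : ℝ)⁻¹ • ∑ i, φ (x i)

/-- Pooled empirical (centered) covariance operator. -/
noncomputable def pooledCov {Zt H : Type*} [NormedAddCommGroup H] [InnerProductSpace ℝ H]
    (φ : Zt → H) (n : ℕ) (X Y : Fin n → Zt) : H →L[ℝ] H :=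
  (2 * (n : ℝ))⁻¹ • ∑ i,
    (rankOne (φ (X i) - empMean φ n X) (φ (X i) - empMean φ n X)
      + rankOne (φ (Y i) - empMean φ n Y) (φ (Y i) - empMean φ n Y))

/-- lower bound for empirical eigenvalues: under a bounded kernel with bound
`M_k`, for any eigenpair `(λ̂, f̂)` of the pooled empirical covariance `Σ̂` (with `‖f̂‖ = 1`,
so `λ̂ = ⟪f̂, Σ̂ f̂⟫`) and any unit vector `f`,
`λ̂ ≥ (1/2n)∑ᵢ⟪f̂, φ(Xᵢ)−φ(Yᵢ)⟫² − (1/2)‖μ̂_X−μ̂_Y‖² − 8M_k‖f−f̂‖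
  − (1/n)∑ᵢ⟪f, μ̂_X−φ(Xᵢ)⟫⟪f, φ(Yᵢ)−μ̂_Y⟫`. -/
theorem empirical_eigenvalue_lower_bound
    {Zt H : Type*} [NormedAddCommGroup H] [InnerProductSpace ℝ H]
    (φ : Zt → H) (k : Zt → Zt → ℝ) (Mk : ℝ)
    (hrepr : ∀ z z', k z z' = ⟪φ z, φ z'⟫)
    (hbound : ∀ z, k z z ≤ Mk)
    (n : ℕ) (hn : 0 < n) (X Y : Fin n → Zt)
    (fhat : H) (hfhat : ‖fhat‖ = 1) (lamhat : ℝ)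
    (hlam : lamhat = ⟪fhat, pooledCov φ n X Y fhat⟫)
    (f : H) (hf : ‖f‖ = 1) :
    lamhat ≥ (2 * (n : ℝ))⁻¹ * ∑ i, ⟪fhat, φ (X i) - φ (Y i)⟫ ^ 2
      - (1 / 2) * ‖empMean φ n X - empMean φ n Y‖ ^ 2
      - 8 * Mk * ‖f - fhat‖
      - (n : ℝ)⁻¹ * ∑ i, ⟪f, empMean φ n X - φ (X i)⟫ *
          ⟪f, φ (Y i) - empMean φ n Y⟫ := by
  have hn0 : (n : ℝ) ≠ 0 := Nat.cast_ne_zero.mpr hn.ne'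
  have hnpos : (0:ℝ) < n := Nat.cast_pos.mpr hn
  set μX := empMean φ n X with hμXdef
  set μY := empMean φ n Y with hμYdef
  set a : Fin n → ℝ := fun i => ⟪fhat, φ (X i) - μX⟫ with ha
  set b : Fin n → ℝ := fun i => ⟪fhat, φ (Y i) - μY⟫ with hb
  set c : ℝ := ⟪fhat, μX - μY⟫ with hc
  -- norm bounds
  have hMk0 : 0 ≤ Mk := by
    have h1 := hbound (X ⟨0, hn⟩)
    rw [hrepr] at h1
    have h2 : (0:ℝ) ≤ ⟪φ (X ⟨0, hn⟩), φ (X ⟨0, hn⟩)⟫ := real_inner_self_nonneg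
    linarith
  set s : ℝ := Real.sqrt Mk with hs
  have hs0 : 0 ≤ s := Real.sqrt_nonneg Mk
  have hs2 : s ^ 2 = Mk := Real.sq_sqrt hMk0
  have hφ : ∀ z, ‖φ z‖ ≤ s := by
    intro z
    have h1 : ‖φ z‖ ^ 2 ≤ Mk := by
      have := hbound z; rw [hrepr, real_inner_self_eq_norm_sq] at this; linarith
    nlinarith [norm_nonneg (φ z)]
  have hmean : ∀ x : Fin n → Zt, ‖empMean φ n x‖ ≤ s := by
    intro x
    rw [empMean, norm_smul, norm_inv, Real.norm_natCast]
    have hsum : ‖∑ i, φ (x i)‖ ≤ n * s := by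
      calc ‖∑ i, φ (x i)‖ ≤ ∑ _i : Fin n, s :=
            norm_sum_le_of_le _ (fun i _ => hφ (x i))
        _ = n * s := by rw [Finset.sum_const, Finset.card_fin, nsmul_eq_mul]
    calc (n:ℝ)⁻¹ * ‖∑ i, φ (x i)‖ ≤ (n:ℝ)⁻¹ * (n * s) :=
          mul_le_mul_of_nonneg_left hsum (by positivity)
      _ = s := by field_simp
  -- eigenvalue formula
  have hlam' : lamhat = (2 * (n:ℝ))⁻¹ * ∑ i, (a i ^ 2 + b i ^ 2) := by
    rw [hlam, pooledCov]
    simp only [ContinuousLinearMap.smul_apply, ContinuousLinearMap.sum_apply,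
      ContinuousLinearMap.add_apply, rankOne, ContinuousLinearMap.smulRight_apply,
      innerSL_apply_apply, real_inner_smul_right, inner_sum, inner_add_right]
    congr 1
    refine Finset.sum_congr rfl fun i _ => ?_
    simp only [real_inner_smul_right, ha, hb]
    rw [real_inner_comm (φ (X i) - μX) fhat, real_inner_comm (φ (Y i) - μY) fhat]
    ring
  -- sums of a, b are zero
  have hzero : ∀ (x : Fin n → Zt), ∑ i, ⟪fhat, φ (x i) - empMean φ n x⟫ = 0 := by
    intro x
    rw [← inner_sum]
    have : ∑ i, (φ (x i) - empMean φ n x) = 0 := by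
      rw [Finset.sum_sub_distrib, Finset.sum_const, Finset.card_fin, empMean,
        ← Nat.cast_smul_eq_nsmul ℝ, smul_smul, mul_inv_cancel₀ hn0, one_smul, sub_self]
    rw [this, inner_zero_right]
  have hsa : ∑ i, a i = 0 := hzero X
  have hsb : ∑ i, b i = 0 := hzero Y
  -- rewrite first sum
  have hT : ∀ i, ⟪fhat, φ (X i) - φ (Y i)⟫ = a i - b i + c := by
    intro i
    have : φ (X i) - φ (Y i) = (φ (X i) - μX) - (φ (Y i) - μY) + (μX - μY) := by abel
    rw [this, inner_add_right, inner_sub_right]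
  have hexpand : ∑ i, ⟪fhat, φ (X i) - φ (Y i)⟫ ^ 2
      = ∑ i, (a i ^ 2 + b i ^ 2) - 2 * ∑ i, a i * b i
        + 2 * c * ∑ i, a i - 2 * c * ∑ i, b i + n * c ^ 2 := by
    have h1 : ∀ i, ⟪fhat, φ (X i) - φ (Y i)⟫ ^ 2
        = (a i ^ 2 + b i ^ 2) - 2 * (a i * b i) + 2 * c * a i - 2 * c * b i + c ^ 2 := by
      intro i; rw [hT i]; ring
    rw [Finset.sum_congr rfl (fun i _ => h1 i)]
    rw [Finset.sum_add_distrib, Finset.sum_sub_distrib, Finset.sum_add_distrib,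
      Finset.sum_sub_distrib, ← Finset.mul_sum, ← Finset.mul_sum, ← Finset.mul_sum,
      Finset.sum_const, Finset.card_fin, nsmul_eq_mul]
  -- Cauchy-Schwarz for c
  have hcs : c ^ 2 ≤ ‖μX - μY‖ ^ 2 := by
    have h1 : |c| ≤ ‖fhat‖ * ‖μX - μY‖ := abs_real_inner_le_norm fhat (μX - μY)
    rw [hfhat, one_mul] at h1
    nlinarith [abs_nonneg c, sq_abs c]
  -- cross term bound
  set u : Fin n → H := fun i => μX - φ (X i) with hu
  set v : Fin n → H := fun i => φ (Y i) - μY with hv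
  have hab : ∀ i, a i * b i = -(⟪fhat, u i⟫ * ⟪fhat, v i⟫) := by
    intro i
    show ⟪fhat, φ (X i) - μX⟫ * ⟪fhat, φ (Y i) - μY⟫ = _
    have h1 : φ (X i) - μX = -(u i) := by simp only [hu]; abel
    rw [h1, inner_neg_right]
    simp only [hv]
    ring
  set d : H := fhat - f with hd
  have hdnorm : ‖f - fhat‖ = ‖d‖ := by rw [hd, norm_sub_rev]
  have hterm : ∀ i, ⟪fhat, u i⟫ * ⟪fhat, v i⟫ - ⟪f, u i⟫ * ⟪f, v i⟫ ≤ 8 * Mk * ‖d‖ := by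
    intro i
    have hun : ‖u i‖ ≤ 2 * s := by
      calc ‖u i‖ ≤ ‖μX‖ + ‖φ (X i)‖ := norm_sub_le _ _
        _ ≤ s + s := add_le_add (hmean X) (hφ _)
        _ = 2 * s := by ring
    have hvn : ‖v i‖ ≤ 2 * s := by
      calc ‖v i‖ ≤ ‖φ (Y i)‖ + ‖μY‖ := norm_sub_le _ _
        _ ≤ s + s := add_le_add (hφ _) (hmean Y)
        _ = 2 * s := by ring
    have hid : ⟪fhat, u i⟫ * ⟪fhat, v i⟫ - ⟪f, u i⟫ * ⟪f, v i⟫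
        = ⟪d, u i⟫ * ⟪fhat, v i⟫ + ⟪f, u i⟫ * ⟪d, v i⟫ := by
      have hfh : fhat = f + d := by rw [hd]; abel
      rw [hfh, inner_add_left, inner_add_left]; ring
    have h1 : ⟪d, u i⟫ * ⟪fhat, v i⟫ ≤ ‖d‖ * (2*s) * (2*s) := by
      calc ⟪d, u i⟫ * ⟪fhat, v i⟫ ≤ |⟪d, u i⟫ * ⟪fhat, v i⟫| := le_abs_self _
        _ = |⟪d, u i⟫| * |⟪fhat, v i⟫| := abs_mul _ _
        _ ≤ (‖d‖ * ‖u i‖) * (‖fhat‖ * ‖v i‖) :=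
            mul_le_mul (abs_real_inner_le_norm _ _) (abs_real_inner_le_norm _ _)
              (abs_nonneg _) (by positivity)
        _ = ‖d‖ * ‖u i‖ * ‖v i‖ := by rw [hfhat]; ring
        _ ≤ ‖d‖ * (2*s) * (2*s) := by
            have e2 : ‖d‖ * ‖u i‖ ≤ ‖d‖ * (2*s) :=
              mul_le_mul_of_nonneg_left hun (norm_nonneg d)
            exact mul_le_mul e2 hvn (norm_nonneg _) (by positivity)
    have h2 : ⟪f, u i⟫ * ⟪d, v i⟫ ≤ (2*s) * (‖d‖ * (2*s)) := by
      calc ⟪f, u i⟫ * ⟪d, v i⟫ ≤ |⟪f, u i⟫ * ⟪d, v i⟫| := le_abs_self _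
        _ = |⟪f, u i⟫| * |⟪d, v i⟫| := abs_mul _ _
        _ ≤ (‖f‖ * ‖u i‖) * (‖d‖ * ‖v i‖) :=
            mul_le_mul (abs_real_inner_le_norm _ _) (abs_real_inner_le_norm _ _)
              (abs_nonneg _) (by positivity)
        _ = ‖u i‖ * (‖d‖ * ‖v i‖) := by rw [hf]; ring
        _ ≤ (2*s) * (‖d‖ * (2*s)) := by
            have e1 : ‖d‖ * ‖v i‖ ≤ ‖d‖ * (2*s) :=
              mul_le_mul_of_nonneg_left hvn (norm_nonneg d)
            exact mul_le_mul hun e1 (by positivity) (by positivity)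
    have hss : s * s = Mk := Real.mul_self_sqrt hMk0
    calc ⟪fhat, u i⟫ * ⟪fhat, v i⟫ - ⟪f, u i⟫ * ⟪f, v i⟫
        = ⟪d, u i⟫ * ⟪fhat, v i⟫ + ⟪f, u i⟫ * ⟪d, v i⟫ := hid
      _ ≤ ‖d‖ * (2*s) * (2*s) + (2*s) * (‖d‖ * (2*s)) := add_le_add h1 h2
      _ = 8 * (s * s) * ‖d‖ := by ring
      _ = 8 * Mk * ‖d‖ := by rw [hss]
  have hcross : (n:ℝ)⁻¹ * ∑ i, (⟪fhat, u i⟫ * ⟪fhat, v i⟫ - ⟪f, u i⟫ * ⟪f, v i⟫)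
      ≤ 8 * Mk * ‖d‖ := by
    have h1 : ∑ i, (⟪fhat, u i⟫ * ⟪fhat, v i⟫ - ⟪f, u i⟫ * ⟪f, v i⟫)
        ≤ ∑ _i : Fin n, 8 * Mk * ‖d‖ :=
      Finset.sum_le_sum (fun i _ => hterm i)
    rw [Finset.sum_const, Finset.card_fin, nsmul_eq_mul] at h1
    calc (n:ℝ)⁻¹ * ∑ i, (⟪fhat, u i⟫ * ⟪fhat, v i⟫ - ⟪f, u i⟫ * ⟪f, v i⟫)
        ≤ (n:ℝ)⁻¹ * (n * (8 * Mk * ‖d‖)) := by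
          apply mul_le_mul_of_nonneg_left h1 (by positivity)
      _ = 8 * Mk * ‖d‖ := by field_simp
  -- final combination
  have hsumab : ∑ i, a i * b i = - ∑ i, ⟪fhat, u i⟫ * ⟪fhat, v i⟫ := by
    rw [← Finset.sum_neg_distrib]
    exact Finset.sum_congr rfl fun i _ => hab i
  have hE : (2 * (n:ℝ))⁻¹ * ∑ i, ⟪fhat, φ (X i) - φ (Y i)⟫ ^ 2
      = lamhat + (n:ℝ)⁻¹ * ∑ i, ⟪fhat, u i⟫ * ⟪fhat, v i⟫ + c ^ 2 / 2 := by
    rw [hexpand, hsa, hsb, hsumab, hlam']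
    field_simp
    ring
  rw [Finset.sum_sub_distrib, mul_sub] at hcross
  simp only [hu, hv] at hcross hE
  rw [ge_iff_le, hdnorm]
  linarith [hcs, hcross, hE]
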